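/- Setting k = 1: in R = ℤ[x,y]/(x², y³ + cxy), one has (3y² − 2cx)² = −21c·xy², i.e., the Pontryagin number p₁² of a ℂP²-bundle over S⁴ with c₂ = c equals −21c. -/
import Mathlib

open MvPolynomial

/-- The ideal (x², y³ + c·x·y) in ℤ[x,y], with x = X 0, y = X 1 (case k = 1). -/
noncomputable def relIdealZ1 (c : ℤ) : Ideal (MvPolynomial (Fin 2) ℤ) :=
  Ideal.span {X 0 ^ 2, X 1 ^ 3 + C c * X 0 * X 1}

/-- In R = ℤ[x,y]/(x², y³ + cxy), one has (3y² − 2cx)² = −21c·xy²: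
the Pontryagin number p₁² of a ℂP²-bundle over S⁴ with c₂ = c is −21c. -/
theorem stmt_12 (c : ℤ) :
    Ideal.Quotient.mk (relIdealZ1 c) ((C 3 * X 1 ^ 2 - C (2 * c) * X 0) ^ 2) =
    Ideal.Quotient.mk (relIdealZ1 c) (- (C (21 * c) * X 0 * X 1 ^ 2)) := by
  rw [Ideal.Quotient.eq, relIdealZ1]
  refine Ideal.mem_span_pair.mpr ⟨C (4 * c ^ 2), C 9 * X 1, ?_⟩
  simp only [map_mul, map_pow, map_ofNat]
  ring
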